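/- arXiv:1907.10881 — 4 statements merged into one kernel-verified Lean document; each statement's English description precedes it below -/
import Mathlib

section
/- Let (u_0, u_1, ..., u_{N-1}) be a sequence of nonzero real numbers with u_0 + u_1 + ... + u_{N-1} = 0 (indices mod N), satisfying for each j either u_j = u_{j-1}²/u_{j-2} or u_j = u_{j-2}. Then consecutive terms u_{j-1}, u_j have opposite signs for all j. -/
/-!
Each step of the recurrence preserves the sign of the product of two consecutive terms: if
`u j = u (j-1)^2 / u (j-2)` then `u (j-1) * u j` and `u (j-2) * u (j-1)` differ by the positive
factor `(u (j-1) / u (j-2))^2`, and if `u j = u (j-2)` they coincide. Going once around the cycle,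
a single pair of consecutive terms of equal sign would force all terms to share one sign, which
is impossible for nonzero terms summing to zero.
-/

theorem ZMod.forall_of_add_one {N : ℕ} [NeZero N] {P : ZMod N → Prop} (j : ZMod N) (hj : P j)
    (hstep : ∀ k, P k → P (k + 1)) (k : ZMod N) : P k := by
  have hjn : ∀ n : ℕ, P (j + n) := by
    intro n
    induction n with
    | zero => simpa using hj
    | succ n ih => simpa [add_assoc] using hstep _ ih
  simpa using hjn (k - j).val

section OrderedField

variable {K : Type*} [Field K] [LinearOrder K] [IsStrictOrderedRing K]

theorem mul_pos_iff_of_eq_sq_div_or_eq {a b c : K} (hc : c = b ^ 2 / a ∨ c = a) :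
    0 < b * c ↔ 0 < a * b := by
  rcases hc with rfl | rfl
  · rw [← mul_div_assoc, ← pow_succ', div_pos_iff, mul_pos_iff, Odd.pow_pos_iff (by decide),
      Odd.pow_neg_iff (by decide)]
    tauto
  · rw [mul_comm]

theorem ZMod.sum_ne_zero_of_forall_mul_pos {N : ℕ} [NeZero N] {u : ZMod N → K}
    (hpos : ∀ k, 0 < u k * u (k + 1)) : ∑ k, u k ≠ 0 := by
  have hsame : ∀ k, 0 < u 0 * u k := by
    refine ZMod.forall_of_add_one 0 (mul_self_pos.2 (left_ne_zero_of_mul (hpos 0).ne')) ?_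
    intro k hk
    have h := mul_pos hk (hpos k)
    rw [show u 0 * u k * (u k * u (k + 1)) = u k ^ 2 * (u 0 * u (k + 1)) by ring] at h
    exact pos_of_mul_pos_right h (sq_nonneg _)
  intro hsum
  have : 0 < ∑ k, u 0 * u k := Finset.sum_pos (fun k _ => hsame k) Finset.univ_nonempty
  rw [← Finset.mul_sum, hsum, mul_zero] at this
  exact this.false

end OrderedField

theorem increments_alternate_sign (N : ℕ) [NeZero N] (u : ZMod N → ℝ)
    (hne : ∀ j, u j ≠ 0) (hsum : ∑ j : ZMod N, u j = 0)
    (hrec : ∀ j : ZMod N, u j = (u (j - 1)) ^ 2 / u (j - 2) ∨ u j = u (j - 2)) :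
    ∀ j : ZMod N, u (j - 1) * u j < 0 := by
  have hstep : ∀ k, 0 < u k * u (k + 1) → 0 < u (k + 1) * u (k + 1 + 1) := by
    intro k
    have := hrec (k + 1 + 1)
    rw [add_sub_cancel_right, show k + 1 + 1 - 2 = k by ring] at this
    exact (mul_pos_iff_of_eq_sq_div_or_eq this).2
  intro j
  by_contra! hnonneg
  have hpos : 0 < u (j - 1) * u (j - 1 + 1) := by
    rw [sub_add_cancel]
    exact hnonneg.lt_of_ne' (mul_ne_zero (hne _) (hne _))
  exact ZMod.sum_ne_zero_of_forall_mul_pos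
    (ZMod.forall_of_add_one (j - 1) hpos hstep) hsum
end

section
/- Every nontrivial real quadratic cyclic sequence has even order. Precisely: if φ : ZMod N → ℝ is non-constant and satisfies the QCS equation (γ/2)(2φ(j)-φ(j-1)-φ(j+1))² = (φ(j)-φ(j-1))² + (φ(j)-φ(j+1))² for all j with γ ≠ 2, then N is even. -/
/-!
With `a j = φ (j + 1) - φ j`, the equation at `j + 1` reads
`(γ - 2) (a j ^ 2 + a (j + 1) ^ 2) = 2 γ a j a (j + 1)`, so
`sign (a (j + 1)) = σ * sign (a j)` with `σ = sign ((γ - 2) γ)` independent of `j`.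
Unless `a ≡ 0` (i.e. `φ` is constant), going once around the cycle gives `σ ^ N = 1`;
for odd `N` this forces `σ = 1`, so all `a j` share one nonzero sign, contradicting `∑ j, a j = 0`.
-/

theorem sign_eq_of_half_mul_sq_sub_eq_sq_add_sq {γ x y : ℝ} (hγ : γ ≠ 2)
    (h : γ / 2 * (x - y) ^ 2 = x ^ 2 + y ^ 2) :
    SignType.sign y = SignType.sign ((γ - 2) * γ) * SignType.sign x := by
  by_cases hx : x = 0
  · subst hx
    have hy : (γ - 2) * y ^ 2 = 0 := by linear_combination 2 * h
    have hy0 : y = 0 := pow_eq_zero_iff two_ne_zero |>.mp <|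
      (mul_eq_zero.mp hy).resolve_left (sub_ne_zero.mpr hγ)
    simp [hy0]
  have hγ0 : γ ≠ 0 := by
    rintro rfl
    exact hx (by nlinarith)
  have key : (γ - 2) * γ * x * (x ^ 2 + y ^ 2) = y * (2 * γ ^ 2 * x ^ 2) := by
    linear_combination 2 * γ * x * h
  have hpos : 0 < x ^ 2 + y ^ 2 := by positivity
  have hpos' : 0 < 2 * γ ^ 2 * x ^ 2 := by positivity
  have hsign := congrArg SignType.sign key
  rwa [sign_mul, sign_mul _ (_ * _), sign_pos hpos, sign_pos hpos', mul_one, mul_one, sign_mul,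
    eq_comm] at hsign

theorem apply_add_natCast_eq_pow_mul {R M : Type*} [AddMonoidWithOne R] [Monoid M]
    {f : R → M} {σ : M} (h : ∀ j, f (j + 1) = σ * f j) (j : R) (n : ℕ) :
    f (j + n) = σ ^ n * f j := by
  induction n with
  | zero => simp
  | succ n ih => rw [Nat.cast_succ, ← add_assoc, h, ih, pow_succ', mul_assoc]

theorem ZMod.periodic_one_apply_eq {N : ℕ} [NeZero N] {α : Type*} {f : ZMod N → α}
    (h : Function.Periodic f 1) (i k : ZMod N) : f i = f k := by
  have hshift := (h.nat_mul (k - i).val) i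
  rwa [ZMod.natCast_zmod_val, mul_one, add_sub_cancel, eq_comm] at hshift

theorem Fintype.sum_apply_add_sub_apply {G M : Type*} [AddGroup G] [Fintype G] [AddCommGroup M]
    (f : G → M) (c : G) : ∑ j, (f (j + c) - f j) = 0 := by
  rw [Finset.sum_sub_distrib, sub_eq_zero]
  exact Equiv.sum_comp (Equiv.addRight c) f

theorem SignType.eq_one_of_pow_mul_eq_self {σ t : SignType} {n : ℕ} (hn : Odd n) (ht : t ≠ 0)
    (h : σ ^ n * t = t) : σ = 1 := by
  rw [σ.pow_odd hn, mul_eq_right₀ ht] at h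
  exact h

theorem real_qcs_even_order (N : ℕ) (γ : ℝ) (hγ : γ ≠ 2) (φ : ZMod N → ℝ)
    (heq : ∀ j : ZMod N, γ / 2 * (2 * φ j - φ (j - 1) - φ (j + 1)) ^ 2 =
      (φ j - φ (j - 1)) ^ 2 + (φ j - φ (j + 1)) ^ 2)
    (hnc : ∃ j k : ZMod N, φ j ≠ φ k) :
    Even N := by
  set a : ZMod N → ℝ := fun j => φ (j + 1) - φ j
  set σ := SignType.sign ((γ - 2) * γ)
  have hsign : ∀ j, SignType.sign (a (j + 1)) = σ * SignType.sign (a j) := fun j => by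
    refine sign_eq_of_half_mul_sq_sub_eq_sq_add_sq hγ ?_
    have h := heq (j + 1)
    rw [add_sub_cancel_right] at h
    linear_combination h
  by_contra hodd
  have : NeZero N := ⟨by rintro rfl; exact hodd Even.zero⟩
  obtain ⟨j₀, hj₀⟩ : ∃ j₀, a j₀ ≠ 0 := by
    by_contra! hflat
    obtain ⟨j, k, hjk⟩ := hnc
    exact hjk (ZMod.periodic_one_apply_eq (fun i => sub_eq_zero.mp (hflat i)) j k)
  have hσ : σ = 1 := by
    refine SignType.eq_one_of_pow_mul_eq_self (Nat.not_even_iff_odd.mp hodd)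
      (sign_ne_zero.mpr hj₀) ?_
    have hcycle := apply_add_natCast_eq_pow_mul (f := fun j => SignType.sign (a j)) hsign j₀ N
    simpa using hcycle.symm
  have hconst : ∀ j, SignType.sign (a j) = SignType.sign (a j₀) :=
    (ZMod.periodic_one_apply_eq (f := fun j => SignType.sign (a j)) (by simp [hsign, hσ]) · j₀)
  have hsum := sign_sum Finset.univ_nonempty _ fun j _ => hconst j
  rw [Fintype.sum_apply_add_sub_apply, sign_zero, eq_comm, sign_eq_zero_iff] at hsum
  exact hj₀ hsum
end

section
/- Every complex QCS with constant γ has all edges of equal length: if φ : ZMod N → ℂ satisfies the QCS equation with constant real γ ≤ 1, γ ≠ 2, and is non-degenerate (consecutive terms distinct), then |φ(j+1) - φ(j)| is independent of j. -/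
/-!
Write `u j = φ (j + 1) - φ j`. The QCS equation at `j + 1` says that the ratio `r = u (j + 1) / u j`
satisfies `γ (1 - r)² = 2 (1 + r²)`, i.e. it is a root of the palindromic real quadratic
`(γ - 2) z² - 2γ z + (γ - 2)`, whose discriminant `16 (γ - 1)` is nonpositive for `γ ≤ 1`.
So either `r` is non-real, its conjugate is the other root and `r · conj r = 1`, or `r = -1`.
In both cases `‖u (j + 1)‖ = ‖u j‖`, and stepping around `ZMod N` gives equal edges.
-/

open ComplexConjugate

theorem Complex.norm_eq_one_of_mul_one_sub_sq_eq {γ : ℝ} (hγ : γ ≤ 1) {r : ℂ}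
    (h : (γ : ℂ) * (1 - r) ^ 2 = 2 * (1 + r ^ 2)) : ‖r‖ = 1 := by
  have hc : (γ : ℂ) - 2 ≠ 0 := by
    rw [← Complex.ofReal_ofNat, ← Complex.ofReal_sub, Complex.ofReal_ne_zero]
    linarith
  have hconj : (γ : ℂ) * (1 - conj r) ^ 2 = 2 * (1 + conj r ^ 2) := by
    simpa [map_ofNat] using congrArg conj h
  have hsplit : (r - conj r) * (((γ : ℂ) - 2) * (r + conj r) - 2 * γ) = 0 := by
    linear_combination h - hconj
  rcases mul_eq_zero.mp hsplit with hreal | hsum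
  · obtain ⟨x, rfl⟩ := Complex.conj_eq_iff_real.mp (sub_eq_zero.mp hreal).symm
    have hx : γ * (1 - x) ^ 2 = 2 * (1 + x ^ 2) := by exact_mod_cast h
    have : x = -1 := by nlinarith [sq_nonneg (1 - x), sq_nonneg (1 + x)]
    simp [this]
  · have hprod : ((γ : ℂ) - 2) * (r * conj r - 1) = 0 := by
      linear_combination r * hsum - h
    have : (Complex.normSq r : ℂ) = 1 := by
      rw [← Complex.mul_conj]
      exact sub_eq_zero.mp ((mul_eq_zero.mp hprod).resolve_left hc)
    rw [← pow_eq_one_iff_of_nonneg (norm_nonneg r) two_ne_zero, Complex.sq_norm]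
    exact_mod_cast this

theorem norm_eq_of_qcs_increments {γ : ℝ} (hγ : γ ≤ 1) {a b : ℂ} (ha : a ≠ 0)
    (h : (γ : ℂ) / 2 * (a - b) ^ 2 = a ^ 2 + b ^ 2) : ‖b‖ = ‖a‖ := by
  have hr : (γ : ℂ) * (1 - b / a) ^ 2 = 2 * (1 + (b / a) ^ 2) := by
    field_simp
    linear_combination 2 * h
  rw [← div_mul_cancel₀ b ha, norm_mul, Complex.norm_eq_one_of_mul_one_sub_sq_eq hγ hr, one_mul]

theorem ZMod.apply_eq_of_apply_add_one_eq {N : ℕ} {α : Type*} {f : ZMod N → α}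
    (h : ∀ j, f (j + 1) = f j) (j k : ZMod N) : f j = f k := by
  have shift : ∀ n : ℤ, f (j + n) = f j := by
    intro n
    induction n using Int.induction_on with
    | zero => simp
    | succ n ih => rw [Int.cast_add, Int.cast_one, ← add_assoc, h, ih]
    | pred n ih => rw [← ih, ← h, Int.cast_sub, Int.cast_one, add_sub, sub_add_cancel]
  obtain ⟨n, hn⟩ := ZMod.intCast_surjective (k - j)
  rw [← shift n, hn, add_sub_cancel]

theorem complex_qcs_equal_edges_general (N : ℕ) (γ : ℝ) (hγ1 : γ ≤ 1)
    (φ : ZMod N → ℂ)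
    (heq : ∀ j : ZMod N, ((γ : ℂ) / 2) * (2 * φ j - φ (j - 1) - φ (j + 1)) ^ 2 =
      (φ j - φ (j - 1)) ^ 2 + (φ j - φ (j + 1)) ^ 2)
    (hnd : ∀ j : ZMod N, φ (j + 1) ≠ φ j) :
    ∀ j k : ZMod N, ‖φ (j + 1) - φ j‖ = ‖φ (k + 1) - φ k‖ := by
  refine ZMod.apply_eq_of_apply_add_one_eq (f := fun j ↦ ‖φ (j + 1) - φ j‖) fun j ↦ ?_
  apply norm_eq_of_qcs_increments hγ1 (sub_ne_zero.mpr (hnd j))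
  have := heq (j + 1)
  rw [add_sub_cancel_right] at this
  linear_combination this

theorem complex_qcs_equal_edges (N : ℕ) (γ : ℝ) (hγ1 : γ ≤ 1) (hγ2 : γ ≠ 2)
    (φ : ZMod N → ℂ)
    (heq : ∀ j : ZMod N, ((γ : ℂ) / 2) * (2 * φ j - φ (j - 1) - φ (j + 1)) ^ 2 =
      (φ j - φ (j - 1)) ^ 2 + (φ j - φ (j + 1)) ^ 2)
    (hnd : ∀ j : ZMod N, φ (j + 1) ≠ φ j) :
    ∀ j k : ZMod N, ‖φ (j + 1) - φ j‖ = ‖φ (k + 1) - φ k‖ :=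
  complex_qcs_equal_edges_general N γ hγ1 φ heq hnd
end

section
/- The number of 2-step walks of even length L (with turning angle π/2) from the origin to k + iℓ equals 2·C(b₀+b₂, b₀)·C(b₁+b₃, b₁), where b₀,b₁,b₂,b₃ are the coefficients of the unique defining polynomial; moreover b₁ + b₃ = b₀ + b₂. -/
/-!
Write a heading `a : ZMod 4` (the step `I ^ a`) as its axis `a mod 2` together with a flag saying
whether it points backwards (`a ∈ {2, 3}`). A quarter turn is exactly a change of axis, so a
two-step walk of length `L = 2m` is its starting axis (two choices) plus an arbitrary choice of
flags. Its endpoint is `(m - 2 * #backward horizontal) + (m - 2 * #backward vertical) i`, so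
reaching `k + ℓ i` means choosing `b2` of the `m` horizontal steps and `b3` of the `m` vertical
ones to point backwards, and `C(m, b2) = C(b0 + b2, b0)` because `b0 + b2 = m`.
-/

open Finset Complex

section Counting

variable {α : Type*} [Fintype α]

def boolSign (b : Bool) : ℤ := if b then -1 else 1

theorem sum_boolSign (s : α → Bool) :
    ∑ a, boolSign (s a) = Fintype.card α - 2 * #{a | s a} := by
  have hsign : ∀ b, boolSign b = 1 - 2 * if b then 1 else 0 := by decide
  simp only [hsign, sum_sub_distrib, ← mul_sum, sum_boole, sum_const, card_univ]
  simp

def boolFunEquivFinset [DecidableEq α] : (α → Bool) ≃ Finset α where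
  toFun s := {a | s a}
  invFun S a := decide (a ∈ S)
  left_inv s := by ext; simp
  right_inv S := by ext; simp

theorem card_sum_boolSign_eq [DecidableEq α] (b : ℕ) :
    Nat.card {s : α → Bool // ∑ a, boolSign (s a) = Fintype.card α - 2 * b} =
      (Fintype.card α).choose b := by
  have hsum (s : α → Bool) : ∑ a, boolSign (s a) = Fintype.card α - 2 * b ↔
      #(boolFunEquivFinset s) = b := by
    rw [sum_boolSign]
    change _ ↔ #{a | s a} = b
    omega
  rw [Nat.card_congr (boolFunEquivFinset.subtypeEquiv (q := fun S => #S = b) hsum),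
    Nat.card_eq_fintype_card, Fintype.card_finset_len]

end Counting

theorem intCast_add_intCast_mul_I_eq_iff {x y k ℓ : ℤ} :
    (x : ℂ) + y * I = k + ℓ * I ↔ x = k ∧ y = ℓ := by
  simp [Complex.ext_iff]

section Endpoint

variable {ι : Type*} [Fintype ι]

def endpoint (p : ι → ZMod 2) (s : ι → Bool) : ℂ :=
  ∑ i, I ^ (p i).val * boolSign (s i)

theorem endpoint_eq (p : ι → ZMod 2) (s : ι → Bool) :
    endpoint p s = ((∑ i : {i // p i = 0}, boolSign (s i) : ℤ) : ℂ) +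
      ((∑ i : {i // ¬p i = 0}, boolSign (s i) : ℤ) : ℂ) * I := by
  have hval : ∀ x : ZMod 2, ¬x = 0 → x.val = 1 := by decide
  rw [endpoint, ← Fintype.sum_subtype_add_sum_subtype (fun i => p i = 0)]
  push_cast
  rw [sum_mul]
  congr 1 <;> refine Finset.sum_congr rfl fun i _ => ?_
  · simp [i.2]
  · rw [hval _ i.2, pow_one, mul_comm]

theorem card_endpoint_eq [DecidableEq ι] (p : ι → ZMod 2) {k ℓ : ℤ} {bH bV : ℕ}
    (hk : k = Fintype.card {i // p i = 0} - 2 * bH)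
    (hℓ : ℓ = Fintype.card {i // ¬p i = 0} - 2 * bV) :
    Nat.card {s : ι → Bool // endpoint p s = k + ℓ * I} =
      (Fintype.card {i // p i = 0}).choose bH * (Fintype.card {i // ¬p i = 0}).choose bV := by
  have hsplit (s : ι → Bool) : endpoint p s = k + ℓ * I ↔
      (∑ i : {i // p i = 0}, boolSign (s i) = k ∧
        ∑ i : {i // ¬p i = 0}, boolSign (s i) = ℓ) := by
    rw [endpoint_eq, intCast_add_intCast_mul_I_eq_iff]
  rw [Nat.card_congr (((Equiv.piEquivPiSubtypeProd _ _).subtypeEquiv hsplit).trans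
      (Equiv.subtypeProdEquivProd (p := fun u => ∑ i, boolSign (u i) = k)
        (q := fun v => ∑ i, boolSign (v i) = ℓ))),
    Nat.card_prod, hk, hℓ, card_sum_boolSign_eq, card_sum_boolSign_eq]

end Endpoint

theorem card_fin_add_natCast_eq_zero (m : ℕ) (ε : ZMod 2) :
    Fintype.card {i : Fin (m + m) // ε + ((i : ℕ) : ZMod 2) = 0} = m := by
  have hε := ZMod.val_lt ε
  have hcond (n : ℕ) : ε + (n : ZMod 2) = 0 ↔ n % 2 = ε.val := by
    have hchar : ∀ a b : ZMod 2, a + b = 0 ↔ b = a := by decide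
    rw [hchar, ← ZMod.val_natCast, (ZMod.val_injective 2).eq_iff]
  let e : {i : Fin (m + m) // ε + ((i : ℕ) : ZMod 2) = 0} ≃ Fin m :=
    { toFun i := ⟨i.1 / 2, by omega⟩
      invFun j := ⟨⟨2 * j + ε.val, by omega⟩, (hcond _).2 (by dsimp only; omega)⟩
      left_inv i := Subtype.ext (Fin.ext (by have := (hcond _).1 i.2; dsimp only; omega))
      right_inv j := Fin.ext (by dsimp only; omega) }
  rw [Fintype.card_congr e, Fintype.card_fin]

theorem card_fin_add_natCast_ne_zero (m : ℕ) (ε : ZMod 2) :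
    Fintype.card {i : Fin (m + m) // ¬ε + ((i : ℕ) : ZMod 2) = 0} = m := by
  rw [Fintype.card_subtype_compl, card_fin_add_natCast_eq_zero, Fintype.card_fin,
    Nat.add_sub_cancel]

def axisSignEquiv : ZMod 4 ≃ ZMod 2 × Bool where
  toFun a := ((a.val : ZMod 2), decide (2 ≤ a.val))
  invFun p := ((p.1.val + 2 * p.2.toNat : ℕ) : ZMod 4)
  left_inv := by decide
  right_inv := by decide

theorem val_eq_axisSignEquiv (a : ZMod 4) :
    a.val = (axisSignEquiv a).1.val + 2 * (axisSignEquiv a).2.toNat := by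
  revert a; decide

theorem eq_add_one_or_eq_sub_one_iff_axisSignEquiv (a b : ZMod 4) :
    (b = a + 1 ∨ b = a - 1) ↔ (axisSignEquiv b).1 = (axisSignEquiv a).1 + 1 := by
  revert a b; decide

theorem I_pow_val_eq (a : ZMod 4) :
    I ^ a.val = I ^ (axisSignEquiv a).1.val * boolSign (axisSignEquiv a).2 := by
  rw [val_eq_axisSignEquiv, pow_add, pow_mul, I_sq]
  cases (axisSignEquiv a).2 <;> simp [boolSign]

def IsTwoStepWalk {L : ℕ} (t : Fin L → ZMod 4) : Prop :=
  ∀ (j : ℕ) (h : j + 1 < L),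
    t ⟨j + 1, h⟩ = t ⟨j, Nat.lt_of_succ_lt h⟩ + 1 ∨
    t ⟨j + 1, h⟩ = t ⟨j, Nat.lt_of_succ_lt h⟩ - 1

section TwoStepWalk

variable {L : ℕ}

theorem IsTwoStepWalk.axis_eq {t : Fin L → ZMod 4} (ht : IsTwoStepWalk t) (i : Fin L) :
    (axisSignEquiv (t i)).1 = (axisSignEquiv (t ⟨0, i.pos⟩)).1 + (i : ℕ) := by
  obtain ⟨i, hi⟩ := i
  induction i with
  | zero => simp
  | succ j ih =>
    rw [(eq_add_one_or_eq_sub_one_iff_axisSignEquiv _ _).1 (ht j hi), ih (Nat.lt_of_succ_lt hi)]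
    push_cast
    ring

theorem isTwoStepWalk_axisSignEquiv_symm (ε : ZMod 2) (s : Fin L → Bool) :
    IsTwoStepWalk fun i => axisSignEquiv.symm (ε + (i : ℕ), s i) := by
  intro j h
  rw [eq_add_one_or_eq_sub_one_iff_axisSignEquiv, Equiv.apply_symm_apply, Equiv.apply_symm_apply]
  push_cast
  ring

def twoStepWalkEquiv (hL : 0 < L) :
    {t : Fin L → ZMod 4 // IsTwoStepWalk t} ≃ ZMod 2 × (Fin L → Bool) where
  toFun t := ((axisSignEquiv (t.1 ⟨0, hL⟩)).1, fun i => (axisSignEquiv (t.1 i)).2)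
  invFun x := ⟨fun i => axisSignEquiv.symm (x.1 + (i : ℕ), x.2 i),
    isTwoStepWalk_axisSignEquiv_symm x.1 x.2⟩
  left_inv t := Subtype.ext <| funext fun i =>
    axisSignEquiv.symm_apply_eq.2 (Prod.ext (t.2.axis_eq i).symm rfl)
  right_inv x := by simp

theorem sum_I_pow_twoStepWalkEquiv_symm (hL : 0 < L) (x : ZMod 2 × (Fin L → Bool)) :
    ∑ i, I ^ (((twoStepWalkEquiv hL).symm x).1 i).val =
      endpoint (fun i : Fin L => x.1 + (i : ℕ)) x.2 := by
  refine Finset.sum_congr rfl fun i _ => ?_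
  simp [twoStepWalkEquiv, I_pow_val_eq]

theorem card_twoStepWalk_eq_sum (hL : 0 < L) (z : ℂ) :
    Nat.card {t : Fin L → ZMod 4 // IsTwoStepWalk t ∧ ∑ i, I ^ (t i).val = z} =
      ∑ ε : ZMod 2,
        Nat.card {s : Fin L → Bool // endpoint (fun i : Fin L => ε + (i : ℕ)) s = z} := by
  calc _ = Nat.card {w : {t // IsTwoStepWalk t} // ∑ i, I ^ (w.1 i).val = z} :=
        Nat.card_congr (Equiv.subtypeSubtypeEquivSubtypeInter _ _).symm
    _ = Nat.card {x : ZMod 2 × (Fin L → Bool) //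
          endpoint (fun i : Fin L => x.1 + (i : ℕ)) x.2 = z} :=
        Nat.card_congr <| (twoStepWalkEquiv hL).subtypeEquiv fun w => by
          rw [← sum_I_pow_twoStepWalkEquiv_symm hL, Equiv.symm_apply_apply]
    _ = _ := by
      rw [Nat.card_congr (Equiv.subtypeProdEquivSigmaSubtype fun ε s =>
        endpoint (fun i : Fin L => ε + (i : ℕ)) s = z), Nat.card_sigma]

end TwoStepWalk

theorem two_step_walk_count (L : ℕ) (hL : Even L) (hL0 : 0 < L) (k ℓ : ℤ)
    (b0 b1 b2 b3 : ℕ)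
    (h0 : 4 * (b0 : ℤ) = L + 2 * k) (h1 : 4 * (b1 : ℤ) = L + 2 * ℓ)
    (h2 : 4 * (b2 : ℤ) = L - 2 * k) (h3 : 4 * (b3 : ℤ) = L - 2 * ℓ) :
    Nat.card {t : Fin L → ZMod 4 //
      (∀ (j : ℕ) (h : j + 1 < L),
        t ⟨j + 1, h⟩ = t ⟨j, Nat.lt_of_succ_lt h⟩ + 1 ∨
        t ⟨j + 1, h⟩ = t ⟨j, Nat.lt_of_succ_lt h⟩ - 1) ∧
      ∑ i : Fin L, Complex.I ^ (t i).val = (k : ℂ) + (ℓ : ℂ) * Complex.I} =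
      2 * (b0 + b2).choose b0 * (b1 + b3).choose b1 ∧
    b1 + b3 = b0 + b2 := by
  obtain ⟨m, rfl⟩ := hL
  have hb02 : b0 + b2 = m := by omega
  have hb13 : b1 + b3 = m := by omega
  refine ⟨(card_twoStepWalk_eq_sum hL0 _).trans ?_, by omega⟩
  rw [Finset.sum_congr rfl fun ε _ =>
    card_endpoint_eq (fun i : Fin (m + m) => ε + (i : ℕ)) (bH := b2) (bV := b3)
      (by rw [card_fin_add_natCast_eq_zero]; omega) (by rw [card_fin_add_natCast_ne_zero]; omega)]
  simp only [card_fin_add_natCast_eq_zero, card_fin_add_natCast_ne_zero, sum_const, card_univ,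
    ZMod.card, smul_eq_mul]
  rw [Nat.choose_symm_add, Nat.choose_symm_add, hb02, hb13, mul_assoc]
end
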